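/- arXiv:2505.11298 — 5 statements merged into one kernel-verified Lean document; each statement's English description precedes it below -/
import Mathlib

section
/- Let G and H be finite simple graphs, and let x' and x̃ be two feature assignments defined on all vertices of G and H, with x' taking values in a normed space E' and x̃ in a normed space E. Assume: (i) for all u ∈ V(G) and v ∈ V(H), ‖x'_u − x'_v‖ ≤ ‖x̃_u − x̃_v‖; and (ii) for every vertex u of G or H, ‖x'_u‖ ≤ ‖x̃_u‖. Then for every depth t ≥ 1, TMD^t((G, x'), (H, x')) ≤ TMD^t((G, x̃), (H, x̃)), where (G, x') denotes the graph G equipped with the features x'. -/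
open Finset

universe u v

/-- Minimum matching cost between two equal-length tuples, with ground cost `d`. -/
noncomputable def matchCost {α : Type u} (d : α → α → ℝ) {n : ℕ} (x y : Fin n → α) : ℝ :=
  ⨅ σ : Equiv.Perm (Fin n), ∑ i, d (x i) (y (σ i))

/-- Pad a list to length `n` with the padding element `z`. -/
def padWith {α : Type u} (z : α) (L : List α) (n : ℕ) : Fin n → α :=
  fun i => if h : (i : ℕ) < L.length then L.get ⟨i, h⟩ else z

/-- Optimal matching cost between two lists, padded with `z` to equal length. -/
noncomputable def padMatchCost {α : Type u} (d : α → α → ℝ) (z : α) (L L' : List α) : ℝ :=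
  matchCost d (padWith z L (max L.length L'.length)) (padWith z L' (max L.length L'.length))

/-- A feature tree: a root feature together with a finite (multi)set of children,
represented as a list (all notions built on it are invariant under permutation). -/
inductive FeatureTree (E : Type u) : Type u
  | node (root : E) (children : List (FeatureTree E)) : FeatureTree E

namespace FeatureTree

/-- The blank tree `T_∅`. -/
def blank {E : Type u} [Zero E] : FeatureTree E := node 0 []

/-- Fuel-based tree distance. -/
noncomputable def TDAux {E : Type u} [NormedAddCommGroup E] :
    ℕ → FeatureTree E → FeatureTree E → ℝ
  | 0, _, _ => 0
  | (m+1), node a S, node b S' => ‖a - b‖ + padMatchCost (TDAux m) blank S S'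

/-- The tree distance `TD`: `TD((a,S),(b,S')) = ‖a-b‖ + OT_TD(ρ(S,S'))`.
The fuel `sizeOf t₁ + sizeOf t₂` dominates the recursion depth, so this computes
the recursively defined tree distance. -/
noncomputable def TD {E : Type u} [NormedAddCommGroup E] (t₁ t₂ : FeatureTree E) : ℝ :=
  TDAux (sizeOf t₁ + sizeOf t₂) t₁ t₂

end FeatureTree

/-- A featured graph: a finite simple graph with node features in `E`. -/
structure FeaturedGraph (E : Type u) : Type (u+1) where
  V : Type
  fintypeV : Fintype V
  decEqV : DecidableEq V
  graph : SimpleGraph V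
  decAdj : DecidableRel graph.Adj
  feat : V → E

attribute [instance] FeaturedGraph.fintypeV FeaturedGraph.decEqV FeaturedGraph.decAdj

/-- Depth-(t+1) computation tree of node `v`:
`compTree G 0 v = (x_v, ∅)` is the depth-1 tree `T_v^1`, and
`compTree G (t+1) v = (x_v, {{compTree G t u : u ∈ N(v)}})`. -/
noncomputable def FeaturedGraph.compTree {E : Type u} (G : FeaturedGraph E) :
    ℕ → G.V → FeatureTree E
  | 0, v => .node (G.feat v) []
  | (t+1), v => .node (G.feat v) ((G.graph.neighborFinset v).toList.map (G.compTree t))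

/-- Depth-`t` Tree Mover's Distance (for `t ≥ 1`):
`TMD^t(G,H) = OT_TD(ρ({{T_v^t : v ∈ V(G)}}, {{T_u^t : u ∈ V(H)}}))`. -/
noncomputable def TMD {E : Type u} [NormedAddCommGroup E] (t : ℕ) (G H : FeaturedGraph E) : ℝ :=
  padMatchCost FeatureTree.TD FeatureTree.blank
    ((Finset.univ : Finset G.V).toList.map (G.compTree (t-1)))
    ((Finset.univ : Finset H.V).toList.map (H.compTree (t-1)))

/-- Package a finite simple graph with features into a featured graph. -/
def FG {E : Type u} (V : Type) [Fintype V] [DecidableEq V]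
    (G : SimpleGraph V) [inst : DecidableRel G.Adj] (x : V → E) : FeaturedGraph E :=
  ⟨V, ‹_›, ‹_›, G, inst, x⟩


/-! Padding a vertex set by a phantom vertex `none`, whose computation tree is the blank tree
and whose feature is `0`, merges the three kinds of matched pairs (vertex/vertex, vertex/blank,
blank/vertex) into one. Hypotheses (i) and (ii) then say precisely that the padded features of
`x'` are dominated by those of `x̃`, pair by pair. Through the recursion
`TD((a,S),(b,S')) = ‖a-b‖ + OT_TD(ρ(S,S'))` this domination propagates to the tree distances of
all padded computation trees, by induction on the depth, because an optimal-transport cost is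
monotone in its ground cost. -/

lemma matchCost_mono {α α' : Type*} {d : α → α → ℝ} {d' : α' → α' → ℝ} {n : ℕ}
    {x y : Fin n → α} {x' y' : Fin n → α'} (h : ∀ i j, d (x i) (y j) ≤ d' (x' i) (y' j)) :
    matchCost d x y ≤ matchCost d' x' y' :=
  ciInf_mono (Set.finite_range _).bddBelow fun σ => Finset.sum_le_sum fun i _ => h i (σ i)

lemma padWith_map {γ α : Type*} (z : α) (f : γ → α) (P : List γ) {n : ℕ} (i : Fin n) :
    padWith z (P.map f) n i = if h : (i : ℕ) < P.length then f (P.get ⟨i, h⟩) else z := by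
  unfold padWith
  rcases lt_or_ge (i : ℕ) P.length with h | h
  · rw [dif_pos (by simpa using h), dif_pos h]
    simp
  · rw [dif_neg (by simpa using not_lt.2 h), dif_neg (not_lt.2 h)]

lemma padMatchCost_map_le {γ δ α α' : Type*} {d : α → α → ℝ} {d' : α' → α' → ℝ}
    {z : α} {z' : α'} {P : List γ} {Q : List δ} {f : γ → α} {g : δ → α}
    {f' : γ → α'} {g' : δ → α'}
    (hfg : ∀ u ∈ P, ∀ v ∈ Q, d (f u) (g v) ≤ d' (f' u) (g' v))
    (hfz : ∀ u ∈ P, d (f u) z ≤ d' (f' u) z')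
    (hzg : ∀ v ∈ Q, d z (g v) ≤ d' z' (g' v)) :
    padMatchCost d z (P.map f) (Q.map g) ≤ padMatchCost d' z' (P.map f') (Q.map g') := by
  unfold padMatchCost
  have hlen : max (P.map f').length (Q.map g').length = max (P.map f).length (Q.map g).length := by
    simp only [List.length_map]
  rw [hlen]
  refine matchCost_mono fun i j => ?_
  have hi := i.isLt
  have hj := j.isLt
  simp only [List.length_map] at hi hj
  simp only [padWith_map]
  split_ifs with hiP hjQ hjQ
  · exact hfg _ (List.get_mem _ _) _ (List.get_mem _ _)
  · exact hfz _ (List.get_mem _ _)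
  · exact hzg _ (List.get_mem _ _)
  · omega

lemma padMatchCost_congr {α : Type*} {d d' : α → α → ℝ} {z : α} {S S' : List α}
    (h : ∀ u ∈ S, ∀ v ∈ S', d u v = d' u v)
    (hz : ∀ u ∈ S, d u z = d' u z) (hz' : ∀ v ∈ S', d z v = d' z v) :
    padMatchCost d z S S' = padMatchCost d' z S S' := by
  have key : ∀ {d₁ d₂ : α → α → ℝ}, (∀ u ∈ S, ∀ v ∈ S', d₁ u v ≤ d₂ u v) →
      (∀ u ∈ S, d₁ u z ≤ d₂ u z) → (∀ v ∈ S', d₁ z v ≤ d₂ z v) →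
      padMatchCost d₁ z S S' ≤ padMatchCost d₂ z S S' := fun h₁ h₂ h₃ => by
    simpa only [List.map_id] using padMatchCost_map_le (f := id) (g := id) (f' := id) (g' := id)
      h₁ h₂ h₃
  exact le_antisymm (key (fun u hu v hv => (h u hu v hv).le) (fun u hu => (hz u hu).le)
    (fun v hv => (hz' v hv).le)) (key (fun u hu v hv => (h u hu v hv).ge)
    (fun u hu => (hz u hu).ge) (fun v hv => (hz' v hv).ge))

lemma padMatchCost_nil_nil {α : Type*} (d : α → α → ℝ) (z : α) :
    padMatchCost d z [] [] = 0 := by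
  have h (x y : Fin 0 → α) : matchCost d x y = 0 := by simp [matchCost]
  exact h _ _

namespace FeatureTree

variable {E : Type*}

lemma sizeOf_lt_of_mem_children {a : E} {S : List (FeatureTree E)} {s : FeatureTree E}
    (hs : s ∈ S) : sizeOf s < sizeOf (node a S) := by
  have := List.sizeOf_lt_of_mem hs
  simp only [node.sizeOf_spec]
  omega

lemma sizeOf_blank_le [Zero E] (s : FeatureTree E) : sizeOf (blank : FeatureTree E) ≤ sizeOf s := by
  obtain ⟨a, S⟩ := s
  cases S <;> simp [blank]
  omega

lemma padMatchCost_children_congr [Zero E] {d d' : FeatureTree E → FeatureTree E → ℝ}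
    {a b : E} {S S' : List (FeatureTree E)}
    (h : ∀ c c', sizeOf c + sizeOf c' < sizeOf (node a S) + sizeOf (node b S') → d c c' = d' c c') :
    padMatchCost d blank S S' = padMatchCost d' blank S S' := by
  have := sizeOf_blank_le (node a S)
  have := sizeOf_blank_le (node b S')
  refine padMatchCost_congr (fun u hu v hv => h u v ?_) (fun u hu => h u blank ?_)
    (fun v hv => h blank v ?_)
  · have := sizeOf_lt_of_mem_children (a := a) hu
    have := sizeOf_lt_of_mem_children (a := b) hv
    omega
  · have := sizeOf_lt_of_mem_children (a := a) hu
    omega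
  · have := sizeOf_lt_of_mem_children (a := b) hv
    omega

lemma TDAux_eq_TDAux [NormedAddCommGroup E] {m m' : ℕ} {s s' : FeatureTree E}
    (hm : sizeOf s + sizeOf s' ≤ m) (hm' : sizeOf s + sizeOf s' ≤ m') :
    TDAux m s s' = TDAux m' s s' := by
  induction m generalizing m' s s' with
  | zero => obtain ⟨a, S⟩ := s; simp at hm
  | succ m ih =>
    obtain ⟨a, S⟩ := s
    obtain ⟨b, S'⟩ := s'
    obtain _ | m' := m'
    · simp at hm'
    simp only [TDAux]
    congr 1
    exact padMatchCost_children_congr (a := a) (b := b) fun c c' hc => ih (by omega) (by omega)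

theorem TD_node_node [NormedAddCommGroup E] (a b : E) (S S' : List (FeatureTree E)) :
    TD (node a S) (node b S') = ‖a - b‖ + padMatchCost TD blank S S' := by
  obtain ⟨m, hm⟩ : ∃ m, sizeOf (node a S) + sizeOf (node b S') = m + 1 :=
    ⟨sizeOf a + sizeOf S + sizeOf (node b S'), by rw [node.sizeOf_spec a S]; omega⟩
  rw [TD, hm, TDAux]
  congr 1
  exact padMatchCost_children_congr (a := a) (b := b) fun c c' hc => TDAux_eq_TDAux (by omega) le_rfl

end FeatureTree

open FeatureTree

namespace SimpleGraph

variable {E : Type*} [Zero E] {α : Type} [Fintype α] [DecidableEq α]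
  (G : SimpleGraph α) [DecidableRel G.Adj] (x : α → E)

noncomputable def paddedCompTree (t : ℕ) : Option α → FeatureTree E :=
  fun o => o.elim blank ((FG α G x).compTree t)

lemma paddedCompTree_zero (o : Option α) : G.paddedCompTree x 0 o = .node (o.elim 0 x) [] := by
  cases o <;> rfl

lemma paddedCompTree_succ (t : ℕ) (o : Option α) :
    G.paddedCompTree x (t + 1) o = .node (o.elim 0 x)
      ((o.elim [] fun v => (G.neighborFinset v).toList).map (G.paddedCompTree x t ∘ some)) := by
  cases o <;> rfl

end SimpleGraph

section FeatureContraction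

variable {E E' : Type*} [NormedAddCommGroup E] [NormedAddCommGroup E'] {α β : Type}
  {x'G : α → E'} {x'H : β → E'} {xtG : α → E} {xtH : β → E}

lemma norm_elim_sub_elim_le (hcross : ∀ (u : α) (v : β), ‖x'G u - x'H v‖ ≤ ‖xtG u - xtH v‖)
    (hnormG : ∀ u : α, ‖x'G u‖ ≤ ‖xtG u‖) (hnormH : ∀ v : β, ‖x'H v‖ ≤ ‖xtH v‖)
    (o : Option α) (o' : Option β) :
    ‖o.elim 0 x'G - o'.elim 0 x'H‖ ≤ ‖o.elim 0 xtG - o'.elim 0 xtH‖ := by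
  cases o <;> cases o' <;> simp [hcross, hnormG, hnormH]

variable [Fintype α] [DecidableEq α] [Fintype β] [DecidableEq β]
  (G : SimpleGraph α) [DecidableRel G.Adj] (H : SimpleGraph β) [DecidableRel H.Adj]

lemma TD_paddedCompTree_le
    (hroot : ∀ (o : Option α) (o' : Option β),
      ‖o.elim 0 x'G - o'.elim 0 x'H‖ ≤ ‖o.elim 0 xtG - o'.elim 0 xtH‖)
    (t : ℕ) (o : Option α) (o' : Option β) :
    TD (G.paddedCompTree x'G t o) (H.paddedCompTree x'H t o') ≤
      TD (G.paddedCompTree xtG t o) (H.paddedCompTree xtH t o') := by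
  induction t generalizing o o' with
  | zero =>
    simp only [SimpleGraph.paddedCompTree_zero, TD_node_node, padMatchCost_nil_nil, add_zero]
    exact hroot o o'
  | succ t ih =>
    simp only [SimpleGraph.paddedCompTree_succ, TD_node_node]
    exact add_le_add (hroot o o') (padMatchCost_map_le (fun u _ v _ => ih (some u) (some v))
      (fun u _ => ih (some u) none) (fun v _ => ih none (some v)))

end FeatureContraction

theorem TMD_mono_of_feature_contraction_general {E : Type u} {E' : Type v}
    [NormedAddCommGroup E] [NormedAddCommGroup E']
    {α β : Type} [Fintype α] [DecidableEq α] [Fintype β] [DecidableEq β]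
    (G : SimpleGraph α) [DecidableRel G.Adj] (H : SimpleGraph β) [DecidableRel H.Adj]
    (x'G : α → E') (x'H : β → E') (xtG : α → E) (xtH : β → E)
    (hcross : ∀ (u : α) (v : β), ‖x'G u - x'H v‖ ≤ ‖xtG u - xtH v‖)
    (hnormG : ∀ u : α, ‖x'G u‖ ≤ ‖xtG u‖)
    (hnormH : ∀ v : β, ‖x'H v‖ ≤ ‖xtH v‖)
    (t : ℕ) :
    TMD t (FG α G x'G) (FG β H x'H) ≤ TMD t (FG α G xtG) (FG β H xtH) := by
  have hTD := TD_paddedCompTree_le G H (norm_elim_sub_elim_le hcross hnormG hnormH) (t - 1)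
  exact padMatchCost_map_le (fun u _ v _ => hTD (some u) (some v)) (fun u _ => hTD (some u) none)
    (fun v _ => hTD none (some v))

/-- Let `G`, `H` be finite simple graphs and let `x'` (valued in `E'`) and
`x̃` (valued in `E`) be feature assignments on the vertices of both graphs.  If
(i) `‖x'_u − x'_v‖ ≤ ‖x̃_u − x̃_v‖` for all `u ∈ V(G)`, `v ∈ V(H)`, and
(ii) `‖x'_u‖ ≤ ‖x̃_u‖` for every vertex `u` of `G` or `H`, then for every depth `t ≥ 1`,
`TMD^t((G,x'), (H,x')) ≤ TMD^t((G,x̃), (H,x̃))`. -/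
theorem TMD_mono_of_feature_contraction {E : Type u} {E' : Type v}
    [NormedAddCommGroup E] [NormedSpace ℝ E] [NormedAddCommGroup E'] [NormedSpace ℝ E']
    {α β : Type} [Fintype α] [DecidableEq α] [Fintype β] [DecidableEq β]
    (G : SimpleGraph α) [DecidableRel G.Adj] (H : SimpleGraph β) [DecidableRel H.Adj]
    (x'G : α → E') (x'H : β → E') (xtG : α → E) (xtH : β → E)
    (hcross : ∀ (u : α) (v : β), ‖x'G u - x'H v‖ ≤ ‖xtG u - xtH v‖)
    (hnormG : ∀ u : α, ‖x'G u‖ ≤ ‖xtG u‖)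
    (hnormH : ∀ v : β, ‖x'H v‖ ≤ ‖xtH v‖)
    (t : ℕ) (ht : 1 ≤ t) :
    TMD t (FG α G x'G) (FG β H x'H) ≤ TMD t (FG α G xtG) (FG β H xtH) :=
  TMD_mono_of_feature_contraction_general G H x'G x'H xtG xtH hcross hnormG hnormH t
end

section
/- Let G and H be finite simple graphs with node features x_v ∈ ℝ^p, and let c assign to each vertex v of G or H an augmentation vector c_v ∈ ℝ^q. For a subset I ⊆ {1, …, q} of the augmentation coordinates, define x̃_v := (x_v, c_v) ∈ ℝ^{p+q} and x'_v := (x_v, (c_v)_I) ∈ ℝ^{p+|I|}, where (c_v)_I is the restriction of c_v to the coordinates in I. Then for every depth t ≥ 1, TMD^t((G, x'), (H, x')) ≤ TMD^t((G, x̃), (H, x̃)). -/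
open Finset

universe u v

/-- View a plain vector as a point of Euclidean space. -/
def ofVec {n : ℕ} (x : Fin n → ℝ) : EuclideanSpace ℝ (Fin n) := WithLp.toLp 2 x

/-- View a point of Euclidean space as a plain vector. -/
def toVec {n : ℕ} (x : EuclideanSpace ℝ (Fin n)) : Fin n → ℝ := x

/-- Concatenation `(a, b) ∈ ℝ^{p+q}` of `a ∈ ℝ^p` and `b ∈ ℝ^q`. -/
def concatE {p q : ℕ} (a : EuclideanSpace ℝ (Fin p)) (b : EuclideanSpace ℝ (Fin q)) :
    EuclideanSpace ℝ (Fin (p + q)) :=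
  ofVec (Fin.append (toVec a) (toVec b))

/-- Restriction `b_I ∈ ℝ^{|I|}` of `b ∈ ℝ^q` to the coordinates in `I`
(listed in increasing order). -/
def restrictE {q : ℕ} (I : Finset (Fin q)) (b : EuclideanSpace ℝ (Fin q)) :
    EuclideanSpace ℝ (Fin I.card) :=
  ofVec fun j => toVec b ((I.orderIsoOfFin rfl j : I) : Fin q)

/-! Restricting to the coordinates in `I` is a coordinate projection, hence a `1`-Lipschitz map
`φ` with `φ 0 = 0`.  Applying such a `φ` to every feature maps computation trees to computation
trees and cannot increase any ground cost, so by induction on the depth it cannot increase `TD`,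
and hence not any optimal-matching cost built on it, in particular `TMD`. -/

theorem matchCost_comp_le {α : Type u} {β : Type v} {d : α → α → ℝ} {d' : β → β → ℝ}
    {f : α → β} (h : ∀ a b, d' (f a) (f b) ≤ d a b) {n : ℕ} (x y : Fin n → α) :
    matchCost d' (f ∘ x) (f ∘ y) ≤ matchCost d x y :=
  ciInf_mono (Set.finite_range _).bddBelow fun _ => Finset.sum_le_sum fun _ _ => h _ _

theorem padWith_map_s5 {α : Type u} {β : Type v} (f : α → β) (z : α) (L : List α) (n : ℕ) :
    padWith (f z) (L.map f) n = f ∘ padWith z L n := by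
  funext i
  simp only [padWith, List.length_map, Function.comp_apply]
  split <;> simp

theorem padMatchCost_map_le_s5 {α : Type u} {β : Type v} {d : α → α → ℝ} {d' : β → β → ℝ}
    {f : α → β} (h : ∀ a b, d' (f a) (f b) ≤ d a b) (z : α) (L L' : List α) :
    padMatchCost d' (f z) (L.map f) (L'.map f) ≤ padMatchCost d z L L' := by
  unfold padMatchCost
  rw [List.length_map, List.length_map, padWith_map_s5, padWith_map_s5]
  exact matchCost_comp_le h _ _

theorem sizeOf_list_map {α : Type u} {β : Type v} [SizeOf α] [SizeOf β] {f : α → β} :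
    ∀ {L : List α}, (∀ a ∈ L, sizeOf (f a) = sizeOf a) → sizeOf (L.map f) = sizeOf L
  | [], _ => rfl
  | a :: L, h => by
    simp [h a List.mem_cons_self, sizeOf_list_map fun b hb => h b (List.mem_cons_of_mem a hb)]

namespace FeatureTree

variable {E : Type u} {E' : Type v}

def map (φ : E → E') : FeatureTree E → FeatureTree E'
  | node a S => node (φ a) (S.attach.map fun ⟨T, _⟩ => map φ T)

@[simp]
theorem map_node (φ : E → E') (a : E) (S : List (FeatureTree E)) :
    map φ (node a S) = node (φ a) (S.map (map φ)) := by
  rw [map, List.attach_map_val]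

theorem map_blank [Zero E] [Zero E'] {φ : E → E'} (hφ : φ 0 = 0) :
    map φ (blank : FeatureTree E) = blank := by
  simp [blank, hφ]

theorem sizeOf_map (φ : E → E') : ∀ T : FeatureTree E, sizeOf (map φ T) = sizeOf T
  | node a S => by simp [sizeOf_list_map (L := S) fun T _ => sizeOf_map φ T]

variable [NormedAddCommGroup E] [NormedAddCommGroup E'] {φ : E → E'}

theorem TDAux_map_le (hφ : LipschitzWith 1 φ) (hφ0 : φ 0 = 0) (m : ℕ) (T T' : FeatureTree E) :
    TDAux m (map φ T) (map φ T') ≤ TDAux m T T' := by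
  induction m generalizing T T' with
  | zero => rfl
  | succ m ih =>
    obtain ⟨a, S⟩ := T
    obtain ⟨b, S'⟩ := T'
    have hab : ‖φ a - φ b‖ ≤ ‖a - b‖ := by
      simpa [dist_eq_norm] using hφ.dist_le_mul a b
    simp only [map_node, TDAux]
    rw [← map_blank hφ0]
    exact add_le_add hab (padMatchCost_map_le_s5 ih blank S S')

theorem TD_map_le (hφ : LipschitzWith 1 φ) (hφ0 : φ 0 = 0) (T T' : FeatureTree E) :
    TD (map φ T) (map φ T') ≤ TD T T' := by
  unfold TD
  rw [sizeOf_map, sizeOf_map]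
  exact TDAux_map_le hφ hφ0 _ T T'

end FeatureTree

section MapFeatures

variable {E : Type u} {E' : Type v} {V W : Type} [Fintype V] [DecidableEq V] [Fintype W]
  [DecidableEq W] (G : SimpleGraph V) [DecidableRel G.Adj] (H : SimpleGraph W)
  [DecidableRel H.Adj]

theorem compTree_FG_comp (φ : E → E') (x : V → E) (t : ℕ) (v : V) :
    (FG V G (φ ∘ x)).compTree t v = FeatureTree.map φ ((FG V G x).compTree t v) := by
  induction t generalizing v with
  | zero => simp [FeaturedGraph.compTree, FG]
  | succ t ih =>
    simp only [FeaturedGraph.compTree, FeatureTree.map_node, List.map_map]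
    exact congrArg _ (List.map_congr_left fun u _ => ih u)

theorem TMD_FG_comp_le [NormedAddCommGroup E] [NormedAddCommGroup E'] {φ : E → E'}
    (hφ : LipschitzWith 1 φ) (hφ0 : φ 0 = 0) (x : V → E) (y : W → E) (t : ℕ) :
    TMD t (FG V G (φ ∘ x)) (FG W H (φ ∘ y)) ≤ TMD t (FG V G x) (FG W H y) := by
  unfold TMD
  convert padMatchCost_map_le_s5 (FeatureTree.TD_map_le hφ hφ0) FeatureTree.blank _ _ using 2
  · exact (FeatureTree.map_blank hφ0).symm
  · rw [List.map_map]
    exact List.map_congr_left fun v _ => compTree_FG_comp G φ x _ v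
  · rw [List.map_map]
    exact List.map_congr_left fun w _ => compTree_FG_comp H φ y _ w

end MapFeatures

section CoordinateRestriction

variable {ι κ : Type*} [Fintype ι] [Fintype κ]

def restrictCoords (f : ι → κ) : EuclideanSpace ℝ κ →ₗ[ℝ] EuclideanSpace ℝ ι where
  toFun z := WithLp.toLp 2 fun i => z (f i)
  map_add' _ _ := rfl
  map_smul' _ _ := rfl

theorem norm_restrictCoords_le {f : ι → κ} (hf : f.Injective) (z : EuclideanSpace ℝ κ) :
    ‖restrictCoords f z‖ ≤ ‖z‖ := by
  rw [EuclideanSpace.norm_eq, EuclideanSpace.norm_eq]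
  refine Real.sqrt_le_sqrt ?_
  calc ∑ i, ‖z (f i)‖ ^ 2 = ∑ k ∈ univ.map ⟨f, hf⟩, ‖z k‖ ^ 2 := by rw [Finset.sum_map]; rfl
    _ ≤ ∑ k, ‖z k‖ ^ 2 := Finset.sum_le_univ_sum_of_nonneg fun _ => by positivity

theorem lipschitzWith_restrictCoords {f : ι → κ} (hf : f.Injective) :
    LipschitzWith 1 (restrictCoords f) :=
  LipschitzWith.of_dist_le_mul fun z w => by
    simpa [dist_eq_norm, ← map_sub] using norm_restrictCoords_le hf (z - w)

def restrictEIndex (p : ℕ) {q : ℕ} (I : Finset (Fin q)) : Fin (p + I.card) → Fin (p + q) :=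
  Fin.append (Fin.castAdd q) fun j => Fin.natAdd p (I.orderIsoOfFin rfl j : I)

theorem restrictEIndex_injective (p : ℕ) {q : ℕ} (I : Finset (Fin q)) :
    (restrictEIndex p I).Injective :=
  Fin.append_injective_iff.mpr ⟨Fin.castAdd_injective p q,
    (Fin.natAdd_injective q p).comp (Subtype.val_injective.comp (I.orderIsoOfFin rfl).injective),
    fun i j h => by have := congrArg Fin.val h; simp at this; omega⟩

theorem restrictCoords_concatE {p q : ℕ} (I : Finset (Fin q)) (a : EuclideanSpace ℝ (Fin p))
    (b : EuclideanSpace ℝ (Fin q)) :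
    restrictCoords (restrictEIndex p I) (concatE a b) = concatE a (restrictE I b) := by
  ext k
  induction k using Fin.addCases <;>
    simp [restrictCoords, restrictEIndex, concatE, restrictE, ofVec, toVec]

end CoordinateRestriction

theorem TMD_mono_of_coordinate_restriction_general (p q : ℕ) (I : Finset (Fin q))
    {α β : Type} [Fintype α] [DecidableEq α] [Fintype β] [DecidableEq β]
    (G : SimpleGraph α) [DecidableRel G.Adj] (H : SimpleGraph β) [DecidableRel H.Adj]
    (xG : α → EuclideanSpace ℝ (Fin p)) (xH : β → EuclideanSpace ℝ (Fin p))
    (cG : α → EuclideanSpace ℝ (Fin q)) (cH : β → EuclideanSpace ℝ (Fin q))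
    (t : ℕ) :
    TMD t (FG α G fun v => concatE (xG v) (restrictE I (cG v)))
        (FG β H fun v => concatE (xH v) (restrictE I (cH v))) ≤
      TMD t (FG α G fun v => concatE (xG v) (cG v))
        (FG β H fun v => concatE (xH v) (cH v)) := by
  simp only [← restrictCoords_concatE]
  exact TMD_FG_comp_le G H (lipschitzWith_restrictCoords (restrictEIndex_injective p I))
    (map_zero _) _ _ t

/-- Let `G`, `H` be finite simple graphs with node features `x_v ∈ ℝ^p` and
augmentation vectors `c_v ∈ ℝ^q`.  For a subset `I` of the augmentation coordinates, set
`x̃_v := (x_v, c_v) ∈ ℝ^{p+q}` and `x'_v := (x_v, (c_v)_I) ∈ ℝ^{p+|I|}`.  Then for every depth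
`t ≥ 1`, `TMD^t((G,x'), (H,x')) ≤ TMD^t((G,x̃), (H,x̃))`. -/
theorem TMD_mono_of_coordinate_restriction (p q : ℕ) (I : Finset (Fin q))
    {α β : Type} [Fintype α] [DecidableEq α] [Fintype β] [DecidableEq β]
    (G : SimpleGraph α) [DecidableRel G.Adj] (H : SimpleGraph β) [DecidableRel H.Adj]
    (xG : α → EuclideanSpace ℝ (Fin p)) (xH : β → EuclideanSpace ℝ (Fin p))
    (cG : α → EuclideanSpace ℝ (Fin q)) (cH : β → EuclideanSpace ℝ (Fin q))
    (t : ℕ) (ht : 1 ≤ t) :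
    TMD t (FG α G fun v => concatE (xG v) (restrictE I (cG v)))
        (FG β H fun v => concatE (xH v) (restrictE I (cH v))) ≤
      TMD t (FG α G fun v => concatE (xG v) (cG v))
        (FG β H fun v => concatE (xH v) (cH v)) :=
  TMD_mono_of_coordinate_restriction_general p q I G H xG xH cG cH t
end

section
/- Let (X, pd) be a pseudometric space, K ≥ 2, and let G_tr, G_te ⊆ X be finite and nonempty. Let ξ ≥ 0 satisfy pd(G, H) ≤ ξ for every G ∈ G_te and H ∈ G_tr. Assume each label-probability function η_k : X → [0, 1] (k = 1, …, K) is Lipschitz with constant C with respect to pd, and let h : X → ℝ^K satisfy ‖h(G) − h(H)‖_∞ ≤ L · pd(G, H) for all G, H ∈ X. If γ ≥ 0 and L ξ ≤ γ/4, then L_{G_te}^{γ/2}(h) − L_{G_tr}^{γ}(h) ≤ C K ξ. -/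
open Finset MeasureTheory

/-- `maxOther a k = max_{j ≠ k} a j` (as the supremum of the values at indices `j ≠ k`). -/
noncomputable def maxOther {K : ℕ} (a : Fin K → ℝ) (k : Fin K) : ℝ :=
  sSup {x : ℝ | ∃ j : Fin K, j ≠ k ∧ a j = x}

/-- Margin-loss indicator: `ℓ^γ(a, k) = 1` if `a k ≤ γ + max_{j ≠ k} a j`, else `0`. -/
noncomputable def marginInd {K : ℕ} (γ : ℝ) (a : Fin K → ℝ) (k : Fin K) : ℝ :=
  if a k ≤ γ + maxOther a k then 1 else 0

/-- Expected margin loss `L_S^γ(h) = (1/|S|) ∑_{G ∈ S} ∑_k η_k(G) ℓ^γ(h, G, k)`. -/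
noncomputable def expLoss {X : Type*} {K : ℕ} (S : Finset X) (η : Fin K → X → ℝ)
    (h : X → Fin K → ℝ) (γ : ℝ) : ℝ :=
  (S.card : ℝ)⁻¹ * ∑ G ∈ S, ∑ k, η k G * marginInd γ (h G) k

/-- Empirical margin loss `L̂_S^γ(h) = (1/|S|) ∑_{G ∈ S} ℓ^γ(h, G, y_G)`. -/
noncomputable def empLoss {X : Type*} {K : ℕ} (S : Finset X) (y : ↥S → Fin K)
    (h : X → Fin K → ℝ) (γ : ℝ) : ℝ :=
  (S.card : ℝ)⁻¹ * ∑ G : ↥S, marginInd γ (h (G : X)) (y G)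

/-!
Compare each test point `G` with each training point `H`. The scores move by at most
`L ξ ≤ γ / 4` in sup norm, so a margin failure at level `γ / 2` at `G` forces one at level `γ`
at `H`, while each `η k` moves by at most `C ξ`. Hence the test summand at `G` is at most the
training summand at `H` plus `K C ξ`, and averaging over both sets gives the bound.
-/

section MarginLoss

variable {K : ℕ}

lemma marginInd_nonneg (γ : ℝ) (a : Fin K → ℝ) (k : Fin K) : 0 ≤ marginInd γ a k := by
  unfold marginInd; split_ifs <;> norm_num

lemma marginInd_le_one (γ : ℝ) (a : Fin K → ℝ) (k : Fin K) : marginInd γ a k ≤ 1 := by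
  unfold marginInd; split_ifs <;> norm_num

lemma maxOther_le_maxOther_add (hK : 2 ≤ K) {a b : Fin K → ℝ} {ε : ℝ}
    (hab : ∀ j, a j ≤ b j + ε) (k : Fin K) : maxOther a k ≤ maxOther b k + ε := by
  have : Nontrivial (Fin K) := Fin.nontrivial_iff_two_le.mpr hK
  obtain ⟨j₀, hj₀⟩ := exists_ne k
  have hbdd : BddAbove {x : ℝ | ∃ j : Fin K, j ≠ k ∧ b j = x} :=
    (Set.finite_range b).bddAbove.mono fun _ ⟨j, _, hj⟩ => Set.mem_range.mpr ⟨j, hj⟩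
  refine csSup_le ⟨a j₀, j₀, hj₀, rfl⟩ ?_
  rintro _ ⟨j, hj, rfl⟩
  have hb : b j ≤ maxOther b k := le_csSup hbdd ⟨j, hj, rfl⟩
  linarith [hab j]

lemma marginInd_le_marginInd_of_norm_sub_le (hK : 2 ≤ K) {a b : Fin K → ℝ} {δ γ' γ : ℝ}
    (hab : ‖a - b‖ ≤ δ) (hγ : γ' + 2 * δ ≤ γ) (k : Fin K) :
    marginInd γ' a k ≤ marginInd γ b k := by
  have hcoord : ∀ j, |a j - b j| ≤ δ := fun j => (norm_le_pi_norm (a - b) j).trans hab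
  have hmax : maxOther a k ≤ maxOther b k + δ :=
    maxOther_le_maxOther_add hK (fun j => by linarith [(abs_le.mp (hcoord j)).2]) k
  by_cases ha : a k ≤ γ' + maxOther a k
  · have hb : b k ≤ γ + maxOther b k := by linarith [(abs_le.mp (hcoord k)).1]
    rw [marginInd, if_pos ha, marginInd, if_pos hb]
  · rw [marginInd, if_neg ha]
    exact marginInd_nonneg _ _ _

lemma mul_le_mul_add_of_abs_sub_le {x y m m' c : ℝ} (hxy : |x - y| ≤ c) (hy : 0 ≤ y)
    (hm₀ : 0 ≤ m) (hm₁ : m ≤ 1) (hmm' : m ≤ m') : x * m ≤ y * m' + c := by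
  have hx : x ≤ y + c := by linarith [(abs_le.mp hxy).2]
  have hc : 0 ≤ c := (abs_nonneg _).trans hxy
  nlinarith

lemma sum_mul_marginInd_le_sum_mul_marginInd_add (hK : 2 ≤ K) {p q : Fin K → ℝ}
    {a b : Fin K → ℝ} {c δ γ' γ : ℝ} (hq : ∀ k, 0 ≤ q k) (hpq : ∀ k, |p k - q k| ≤ c)
    (hab : ‖a - b‖ ≤ δ) (hγ : γ' + 2 * δ ≤ γ) :
    ∑ k, p k * marginInd γ' a k ≤ ∑ k, q k * marginInd γ b k + K * c := by
  calc ∑ k, p k * marginInd γ' a k ≤ ∑ k, (q k * marginInd γ b k + c) :=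
        Finset.sum_le_sum fun k _ => mul_le_mul_add_of_abs_sub_le (hpq k) (hq k)
          (marginInd_nonneg _ _ _) (marginInd_le_one _ _ _)
          (marginInd_le_marginInd_of_norm_sub_le hK hab hγ k)
    _ = ∑ k, q k * marginInd γ b k + K * c := by simp [Finset.sum_add_distrib]

end MarginLoss

lemma inv_card_mul_sum_le_inv_card_mul_sum_add {α β : Type*} {S : Finset α} {T : Finset β}
    (hS : S.Nonempty) (hT : T.Nonempty) {f : α → ℝ} {g : β → ℝ} {c : ℝ}
    (hfg : ∀ x ∈ S, ∀ y ∈ T, f x ≤ g y + c) :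
    (S.card : ℝ)⁻¹ * ∑ x ∈ S, f x ≤ (T.card : ℝ)⁻¹ * ∑ y ∈ T, g y + c := by
  have hsup : S.sup' hS f ≤ T.inf' hT g + c := by
    refine Finset.sup'_le _ _ fun x hx => ?_
    have := Finset.le_inf' hT _ fun y hy => sub_le_iff_le_add.mpr (hfg x hx y hy)
    linarith
  calc (S.card : ℝ)⁻¹ * ∑ x ∈ S, f x ≤ S.sup' hS f := by
        rw [inv_mul_le_iff₀ (by exact_mod_cast hS.card_pos)]
        simpa using Finset.sum_le_card_nsmul S f _ fun x hx => Finset.le_sup' f hx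
    _ ≤ T.inf' hT g + c := hsup
    _ ≤ (T.card : ℝ)⁻¹ * ∑ y ∈ T, g y + c := by
        gcongr
        rw [le_inv_mul_iff₀ (by exact_mod_cast hT.card_pos)]
        simpa using Finset.card_nsmul_le_sum T g _ fun y hy => Finset.inf'_le g hy

theorem loss_gap_bound_general {X : Type*} [PseudoMetricSpace X] (K : ℕ) (hK : 2 ≤ K)
    (Gtr Gte : Finset X) (htr : Gtr.Nonempty) (hte : Gte.Nonempty)
    (ξ : ℝ)
    (hξ : ∀ G ∈ Gte, ∀ G' ∈ Gtr, dist G G' ≤ ξ)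
    (η : Fin K → X → ℝ)
    (hη0 : ∀ k G, 0 ≤ η k G)
    (C : ℝ) (hC : 0 ≤ C)
    (hηLip : ∀ k : Fin K, ∀ G G' : X, |η k G - η k G'| ≤ C * dist G G')
    (h : X → Fin K → ℝ) (L : ℝ)
    (hLip : ∀ G G' : X, ‖h G - h G'‖ ≤ L * dist G G')
    (γ : ℝ) (hγ : 0 ≤ γ) (hLξ : L * ξ ≤ γ / 4) :
    expLoss Gte η h (γ / 2) - expLoss Gtr η h γ ≤ C * K * ξ := by
  have hscores : ∀ G ∈ Gte, ∀ H ∈ Gtr, ‖h G - h H‖ ≤ γ / 4 := fun G hG H hH =>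
    calc ‖h G - h H‖ ≤ L * dist G H := hLip G H
      _ ≤ γ / 4 := by
        have hd := hξ G hG H hH
        rcases le_total 0 L with hL | hL <;> nlinarith [dist_nonneg (x := G) (y := H)]
  have hlabels : ∀ G ∈ Gte, ∀ H ∈ Gtr, ∀ k, |η k G - η k H| ≤ C * ξ := fun G hG H hH k =>
    (hηLip k G H).trans (mul_le_mul_of_nonneg_left (hξ G hG H hH) hC)
  have hgap := inv_card_mul_sum_le_inv_card_mul_sum_add hte htr fun G hG H hH =>
    sum_mul_marginInd_le_sum_mul_marginInd_add hK (hη0 · H) (hlabels G hG H hH)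
      (hscores G hG H hH) (show γ / 2 + 2 * (γ / 4) ≤ γ by linarith)
  unfold expLoss
  linarith

/-- In a pseudometric space, if the label-probability functions `η_k` are
`C`-Lipschitz, the classifier `h` is `L`-Lipschitz into `(ℝ^K, ‖·‖_∞)`, every test point is
within distance `ξ` of every training point, and `L ξ ≤ γ/4`, then
`L_{te}^{γ/2}(h) − L_{tr}^γ(h) ≤ C K ξ`. -/
theorem loss_gap_bound {X : Type*} [PseudoMetricSpace X] (K : ℕ) (hK : 2 ≤ K)
    (Gtr Gte : Finset X) (htr : Gtr.Nonempty) (hte : Gte.Nonempty)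
    (ξ : ℝ) (hξ0 : 0 ≤ ξ)
    (hξ : ∀ G ∈ Gte, ∀ G' ∈ Gtr, dist G G' ≤ ξ)
    (η : Fin K → X → ℝ)
    (hη0 : ∀ k G, 0 ≤ η k G) (hη1 : ∀ k G, η k G ≤ 1)
    (C : ℝ) (hC : 0 ≤ C)
    (hηLip : ∀ k : Fin K, ∀ G G' : X, |η k G - η k G'| ≤ C * dist G G')
    (h : X → Fin K → ℝ) (L : ℝ)
    (hLip : ∀ G G' : X, ‖h G - h G'‖ ≤ L * dist G G')
    (γ : ℝ) (hγ : 0 ≤ γ) (hLξ : L * ξ ≤ γ / 4) :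
    expLoss Gte η h (γ / 2) - expLoss Gtr η h γ ≤ C * K * ξ :=
  loss_gap_bound_general K hK Gtr Gte htr hte ξ hξ η hη0 C hC hηLip h L hLip γ hγ hLξ
end

section
/- Let (Ω, ℙ) be a probability space, let f : Ω → ℝ be measurable with f(ω) ≤ 1 for all ω, and let A ⊆ Ω be a measurable event. Let N > 0, α > 0, c ≥ 0 and λ be real numbers with 0 < λ ≤ N^{2α}. Assume: (i) ℙ(A) ≤ exp(−λ N^{−α}); (ii) f(ω) ≤ c for every ω ∉ A; and (iii) ℙ(A ∩ {ω : f(ω) > N^{−α} + c}) ≤ ℙ(A) · exp(−N^{2α}). Then ln 𝔼[exp(λ f)] ≤ ln 3 + λ c. -/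
/-!
Split `Ω` into `Aᶜ`, `A ∩ {f ≤ N^{-α} + c}` and `A ∩ {f > N^{-α} + c}`. On each piece the integral of
`exp(λ f)` is at most the sup of the integrand times the mass of the piece, and the three products are
`e^{λc} · 1`, `e^{λ(N^{-α} + c)} · e^{-λ N^{-α}}` and `e^{λ} · e^{-N^{2α}} ≤ 1`, each at most `e^{λc}`.
Hence `𝔼[exp(λ f)] ≤ 3 e^{λc}`.
-/

open MeasureTheory Real

theorem setIntegral_exp_le_exp_sub {Ω : Type*} [MeasurableSpace Ω] {μ : Measure Ω}
    [IsFiniteMeasure μ] {g : Ω → ℝ} {S : Set Ω} {a b : ℝ}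
    (hS : μ.real S ≤ exp (-a)) (hg : ∀ ω ∈ S, g ω ≤ b) :
    ∫ ω in S, exp (g ω) ∂μ ≤ exp (b - a) :=
  calc ∫ ω in S, exp (g ω) ∂μ ≤ ‖∫ ω in S, exp (g ω) ∂μ‖ := le_norm_self _
    _ ≤ exp b * μ.real S := norm_setIntegral_le_of_norm_le_const (measure_lt_top μ S)
          fun ω hω ↦ by rw [norm_of_nonneg (exp_pos _).le]; exact exp_le_exp.2 (hg ω hω)
    _ ≤ exp b * exp (-a) := by gcongr
    _ = exp (b - a) := by rw [← exp_add, sub_eq_add_neg]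

theorem integrable_exp_mul_of_le {Ω : Type*} [MeasurableSpace Ω] {μ : Measure Ω}
    [IsFiniteMeasure μ] {f : Ω → ℝ} (hf : Measurable f) {b : ℝ} (hfb : ∀ ω, f ω ≤ b) {lam : ℝ}
    (hlam : 0 ≤ lam) : Integrable (fun ω ↦ exp (lam * f ω)) μ := by
  refine .of_bound (hf.const_mul lam).exp.aestronglyMeasurable (exp (lam * b))
    (.of_forall fun ω ↦ ?_)
  rw [norm_of_nonneg (exp_pos _).le, exp_le_exp]
  exact mul_le_mul_of_nonneg_left (hfb ω) hlam

theorem integral_exp_mul_le_three_mul_exp {Ω : Type*} [MeasurableSpace Ω] {μ : Measure Ω}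
    [IsProbabilityMeasure μ] {f : Ω → ℝ} (hf : Measurable f) (hf1 : ∀ ω, f ω ≤ 1)
    {A : Set Ω} (hA : MeasurableSet A) {s t c lam : ℝ} (hc : 0 ≤ c) (hlam0 : 0 ≤ lam)
    (hlam : lam ≤ t) (hoff : ∀ ω ∉ A, f ω ≤ c) (hμA : μ.real A ≤ exp (-(lam * s)))
    (hμAB : μ.real (A ∩ {ω | s + c < f ω}) ≤ exp (-t)) :
    ∫ ω, exp (lam * f ω) ∂μ ≤ 3 * exp (lam * c) := by
  set B := {ω | s + c < f ω}
  have hB : MeasurableSet B := measurableSet_lt measurable_const hf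
  have hint := integrable_exp_mul_of_le (μ := μ) hf hf1 hlam0
  have hAc : ∫ ω in Aᶜ, exp (lam * f ω) ∂μ ≤ exp (lam * c) :=
    calc ∫ ω in Aᶜ, exp (lam * f ω) ∂μ ≤ exp (lam * c - 0) :=
          setIntegral_exp_le_exp_sub (by simp [measureReal_le_one])
            fun ω hω ↦ mul_le_mul_of_nonneg_left (hoff ω hω) hlam0
      _ = exp (lam * c) := by rw [sub_zero]
  have hAB : ∫ ω in A ∩ B, exp (lam * f ω) ∂μ ≤ exp (lam * c) :=
    calc ∫ ω in A ∩ B, exp (lam * f ω) ∂μ ≤ exp (t - t) :=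
          setIntegral_exp_le_exp_sub hμAB fun ω _ ↦ by nlinarith [hf1 ω]
      _ ≤ exp (lam * c) := by rw [sub_self, exp_zero]; exact one_le_exp (by positivity)
  have hAdiffB : ∫ ω in A \ B, exp (lam * f ω) ∂μ ≤ exp (lam * c) :=
    calc ∫ ω in A \ B, exp (lam * f ω) ∂μ ≤ exp (lam * (s + c) - lam * s) :=
          setIntegral_exp_le_exp_sub ((measureReal_mono Set.sdiff_subset).trans hμA)
            fun ω hω ↦ mul_le_mul_of_nonneg_left (not_lt.mp hω.2) hlam0
      _ = exp (lam * c) := by ring_nf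
  rw [← integral_add_compl hA hint, ← integral_inter_add_sdiff hB hint.integrableOn]
  linarith

theorem log_mgf_bound_general {Ω : Type*} [MeasurableSpace Ω]
    (ℙ : Measure Ω) [IsProbabilityMeasure ℙ]
    (f : Ω → ℝ) (hfMeas : Measurable f) (hf1 : ∀ ω, f ω ≤ 1)
    (A : Set Ω) (hA : MeasurableSet A)
    (N α c lam : ℝ) (hc : 0 ≤ c)
    (hlam0 : 0 < lam) (hlam : lam ≤ N ^ (2 * α))
    (h1 : ℙ A ≤ ENNReal.ofReal (Real.exp (-(lam * N ^ (-α)))))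
    (h2 : ∀ ω ∉ A, f ω ≤ c)
    (h3 : ℙ (A ∩ {ω | N ^ (-α) + c < f ω}) ≤ ℙ A * ENNReal.ofReal (Real.exp (-(N ^ (2 * α))))) :
    Real.log (∫ ω, Real.exp (lam * f ω) ∂ℙ) ≤ Real.log 3 + lam * c := by
  have hμA := ENNReal.toReal_le_of_le_ofReal (exp_pos _).le h1
  have hμAB := ENNReal.toReal_le_of_le_ofReal (exp_pos _).le
    (h3.trans (mul_le_of_le_one_left' prob_le_one))
  have hint := integrable_exp_mul_of_le (μ := ℙ) hfMeas hf1 hlam0.le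
  calc Real.log (∫ ω, exp (lam * f ω) ∂ℙ) ≤ Real.log (3 * exp (lam * c)) :=
        log_le_log (integral_exp_pos hint) <| integral_exp_mul_le_three_mul_exp hfMeas hf1 hA hc
          hlam0.le hlam h2 hμA hμAB
    _ = Real.log 3 + lam * c := by rw [log_mul (by norm_num) (exp_pos _).ne', log_exp]

/-- log-MGF bound.  On a probability space, if `f ≤ 1`, `ℙ(A)` is at most
`exp(−λ N^{−α})`, `f ≤ c` off `A`, and `ℙ(A ∩ {f > N^{−α} + c}) ≤ ℙ(A) exp(−N^{2α})`, then for
`0 < λ ≤ N^{2α}`: `ln 𝔼[exp(λ f)] ≤ ln 3 + λ c`. -/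
theorem log_mgf_bound {Ω : Type*} [MeasurableSpace Ω]
    (ℙ : Measure Ω) [IsProbabilityMeasure ℙ]
    (f : Ω → ℝ) (hfMeas : Measurable f) (hf1 : ∀ ω, f ω ≤ 1)
    (A : Set Ω) (hA : MeasurableSet A)
    (N α c lam : ℝ) (hN : 0 < N) (hα : 0 < α) (hc : 0 ≤ c)
    (hlam0 : 0 < lam) (hlam : lam ≤ N ^ (2 * α))
    (h1 : ℙ A ≤ ENNReal.ofReal (Real.exp (-(lam * N ^ (-α)))))
    (h2 : ∀ ω ∉ A, f ω ≤ c)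
    (h3 : ℙ (A ∩ {ω | N ^ (-α) + c < f ω}) ≤ ℙ A * ENNReal.ofReal (Real.exp (-(N ^ (2 * α))))) :
    Real.log (∫ ω, Real.exp (lam * f ω) ∂ℙ) ≤ Real.log 3 + lam * c :=
  log_mgf_bound_general ℙ f hfMeas hf1 A hA N α c lam hc hlam0 hlam h1 h2 h3
end

section
/- Consider an MPNN with t+1 layers and sum aggregation whose message functions g^{(k)} satisfy g^{(k)}(0) = 0 and are Lipschitz with constants L_{g^{(k)}}, and whose update functions f^{(k)} satisfy f^{(k)}(0, 0) = 0 and are Lipschitz for the sum metric with constants L_{f^{(k)}}. Define the layer-(t+1) message at node v as m_v^{(t+1)} := ∑_{u ∈ N(v)} g^{(t+1)}( x_u^{(t)} ). Then for every featured graph G with maximum node degree at most d and ‖x_v‖ ≤ B for all nodes v: max_{v ∈ V(G)} ‖m_v^{(t+1)}‖ ≤ d · L_{g^{(t+1)}} · ( ∏_{k=1}^{t} L_{f^{(k)}} (1 + d L_{g^{(k)}}) ) · B. -/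
open Finset

universe u

/-- Node representations of an MPNN with sum aggregation on featured graphs over
`ℝ^{Fd 0}`: `x_v^{(0)} = x_v` and
`x_v^{(k+1)} = f^{(k+1)}(x_v^{(k)}, ∑_{u ∈ N(v)} g^{(k+1)}(x_u^{(k)}))`,
where layer `k+1` has update `f k` and message `g k`. -/
noncomputable def mpnnRep (Fd M : ℕ → ℕ)
    (f : ∀ k : ℕ, EuclideanSpace ℝ (Fin (Fd k)) × EuclideanSpace ℝ (Fin (M k)) →
      EuclideanSpace ℝ (Fin (Fd (k+1))))
    (g : ∀ k : ℕ, EuclideanSpace ℝ (Fin (Fd k)) → EuclideanSpace ℝ (Fin (M k)))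
    (G : FeaturedGraph (EuclideanSpace ℝ (Fin (Fd 0)))) :
    ∀ k : ℕ, G.V → EuclideanSpace ℝ (Fin (Fd k))
  | 0 => G.feat
  | (k+1) => fun v =>
      f k (mpnnRep Fd M f g G k v,
        ∑ u ∈ G.graph.neighborFinset v, g k (mpnnRep Fd M f g G k u))

/-!
Induction on the layer: if every node representation at layer `k` has norm at most `R`, then
each message is a sum of at most `d` vectors of norm at most `Lg k * R`, and the update,
vanishing at the origin, is at most `Lf k` times the sum of the norms of its two arguments;
so layer `k + 1` is bounded by `Lf k * (1 + d * Lg k) * R`. One more message step at the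
last layer gives the bound.
-/

section Lipschitz

variable {E E' F : Type*} [SeminormedAddCommGroup E] [SeminormedAddCommGroup E']
  [SeminormedAddCommGroup F]

theorem norm_apply_le_of_map_zero {h : E → F} {L : ℝ} (h0 : h 0 = 0)
    (hLip : ∀ a b, ‖h a - h b‖ ≤ L * ‖a - b‖) (a : E) : ‖h a‖ ≤ L * ‖a‖ := by
  simpa [h0] using hLip a 0

theorem norm_apply_prod_le_of_map_zero {h : E × E' → F} {L : ℝ} (h0 : h (0, 0) = 0)
    (hLip : ∀ x m x' m', ‖h (x, m) - h (x', m')‖ ≤ L * (‖x - x'‖ + ‖m - m'‖)) (x : E) (m : E') :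
    ‖h (x, m)‖ ≤ L * (‖x‖ + ‖m‖) := by
  simpa [h0] using hLip x m 0 0

theorem norm_sum_apply_le_of_map_zero {ι : Type*} {h : E → F} {L R : ℝ} {s : Finset ι}
    {x : ι → E} {d : ℕ} (h0 : h 0 = 0) (hLip : ∀ a b, ‖h a - h b‖ ≤ L * ‖a - b‖)
    (hL : 0 ≤ L) (hR : 0 ≤ R) (hx : ∀ u ∈ s, ‖x u‖ ≤ R) (hs : #s ≤ d) :
    ‖∑ u ∈ s, h (x u)‖ ≤ d * L * R :=
  calc ‖∑ u ∈ s, h (x u)‖ ≤ ∑ _u ∈ s, L * R := norm_sum_le_of_le s fun u hu =>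
        (norm_apply_le_of_map_zero h0 hLip _).trans (mul_le_mul_of_nonneg_left (hx u hu) hL)
    _ ≤ d * (L * R) := by
        rw [sum_const, nsmul_eq_mul]
        gcongr
    _ = d * L * R := (mul_assoc _ _ _).symm

end Lipschitz

def mpnnGrowth (Lf Lg : ℕ → ℝ) (d k : ℕ) : ℝ :=
  ∏ j ∈ range k, Lf j * (1 + d * Lg j)

theorem mpnnGrowth_succ (Lf Lg : ℕ → ℝ) (d k : ℕ) :
    mpnnGrowth Lf Lg d (k + 1) = Lf k * (1 + d * Lg k) * mpnnGrowth Lf Lg d k := by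
  rw [mpnnGrowth, prod_range_succ, mul_comm]
  rfl

theorem mpnnGrowth_nonneg {Lf Lg : ℕ → ℝ} {d n : ℕ} (hLf0 : ∀ k < n, 0 ≤ Lf k)
    (hLg0 : ∀ k < n, 0 ≤ Lg k) {k : ℕ} (hk : k ≤ n) : 0 ≤ mpnnGrowth Lf Lg d k :=
  prod_nonneg fun j hj => by
    have hjn : j < n := (mem_range.mp hj).trans_le hk
    have := hLf0 j hjn; have := hLg0 j hjn
    positivity

section Layers

variable {Fd M : ℕ → ℕ}
  {f : ∀ k : ℕ, EuclideanSpace ℝ (Fin (Fd k)) × EuclideanSpace ℝ (Fin (M k)) →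
    EuclideanSpace ℝ (Fin (Fd (k+1)))}
  {g : ∀ k : ℕ, EuclideanSpace ℝ (Fin (Fd k)) → EuclideanSpace ℝ (Fin (M k))}
  {G : FeaturedGraph (EuclideanSpace ℝ (Fin (Fd 0)))} {d : ℕ}

theorem norm_mpnnRep_succ_le {k : ℕ} {Lf Lg R : ℝ} (hLf : 0 ≤ Lf) (hLg : 0 ≤ Lg) (hR : 0 ≤ R)
    (hg0 : g k 0 = 0) (hgLip : ∀ a b, ‖g k a - g k b‖ ≤ Lg * ‖a - b‖)
    (hf0 : f k (0, 0) = 0)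
    (hfLip : ∀ x m x' m', ‖f k (x, m) - f k (x', m')‖ ≤ Lf * (‖x - x'‖ + ‖m - m'‖))
    (hdeg : ∀ v : G.V, #(G.graph.neighborFinset v) ≤ d)
    (hrep : ∀ u, ‖mpnnRep Fd M f g G k u‖ ≤ R) (w : G.V) :
    ‖mpnnRep Fd M f g G (k + 1) w‖ ≤ Lf * (1 + d * Lg) * R :=
  calc ‖mpnnRep Fd M f g G (k + 1) w‖
      ≤ Lf * (‖mpnnRep Fd M f g G k w‖ +
          ‖∑ u ∈ G.graph.neighborFinset w, g k (mpnnRep Fd M f g G k u)‖) :=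
        norm_apply_prod_le_of_map_zero hf0 hfLip _ _
    _ ≤ Lf * (R + d * Lg * R) := by
        gcongr
        · exact hrep w
        · exact norm_sum_apply_le_of_map_zero hg0 hgLip hLg hR (fun u _ => hrep u) (hdeg w)
    _ = Lf * (1 + d * Lg) * R := by ring

theorem norm_mpnnRep_le {n : ℕ} {Lf Lg : ℕ → ℝ} {B : ℝ}
    (hLf0 : ∀ k < n, 0 ≤ Lf k) (hLg0 : ∀ k < n, 0 ≤ Lg k) (hg0 : ∀ k < n, g k 0 = 0)
    (hgLip : ∀ k < n, ∀ a b, ‖g k a - g k b‖ ≤ Lg k * ‖a - b‖)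
    (hf0 : ∀ k < n, f k (0, 0) = 0)
    (hfLip : ∀ k < n, ∀ x m x' m',
      ‖f k (x, m) - f k (x', m')‖ ≤ Lf k * (‖x - x'‖ + ‖m - m'‖))
    (hdeg : ∀ v : G.V, #(G.graph.neighborFinset v) ≤ d)
    (hB0 : 0 ≤ B) (hB : ∀ v : G.V, ‖G.feat v‖ ≤ B) :
    ∀ k ≤ n, ∀ w, ‖mpnnRep Fd M f g G k w‖ ≤ mpnnGrowth Lf Lg d k * B := by
  intro k hk
  induction k with
  | zero => simpa [mpnnGrowth, mpnnRep] using hB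
  | succ k ih =>
    have hkn : k < n := hk
    intro w
    rw [mpnnGrowth_succ, mul_assoc]
    exact norm_mpnnRep_succ_le (hLf0 k hkn) (hLg0 k hkn)
      (mul_nonneg (mpnnGrowth_nonneg hLf0 hLg0 hkn.le) hB0) (hg0 k hkn) (hgLip k hkn)
      (hf0 k hkn) (hfLip k hkn) hdeg (ih hkn.le) w

end Layers

/-- Under the same assumptions as the node-norm bound, the layer-(t+1)
message `m_v^{(t+1)} = ∑_{u ∈ N(v)} g^{(t+1)}(x_u^{(t)})` satisfies
`max_v ‖m_v^{(t+1)}‖ ≤ d · Lg (t+1) · (∏_{k<t} Lf k (1 + d·Lg k)) · B`. -/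
theorem mpnn_message_norm_bound (Fd Mdim : ℕ → ℕ) (t : ℕ)
    (f : ∀ k : ℕ, EuclideanSpace ℝ (Fin (Fd k)) × EuclideanSpace ℝ (Fin (Mdim k)) →
      EuclideanSpace ℝ (Fin (Fd (k+1))))
    (g : ∀ k : ℕ, EuclideanSpace ℝ (Fin (Fd k)) → EuclideanSpace ℝ (Fin (Mdim k)))
    (Lf Lg : ℕ → ℝ)
    (hLf0 : ∀ k < t + 1, 0 ≤ Lf k) (hLg0 : ∀ k < t + 1, 0 ≤ Lg k)
    (hg0 : ∀ k < t + 1, g k 0 = 0)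
    (hgLip : ∀ k < t + 1, ∀ a b, ‖g k a - g k b‖ ≤ Lg k * ‖a - b‖)
    (hf0 : ∀ k < t + 1, f k (0, 0) = 0)
    (hfLip : ∀ k < t + 1, ∀ x m x' m',
      ‖f k (x, m) - f k (x', m')‖ ≤ Lf k * (‖x - x'‖ + ‖m - m'‖))
    (G : FeaturedGraph (EuclideanSpace ℝ (Fin (Fd 0)))) (d : ℕ) (B : ℝ)
    (hdeg : ∀ v : G.V, (G.graph.neighborFinset v).card ≤ d)
    (hB : ∀ v : G.V, ‖G.feat v‖ ≤ B) :
    ∀ v : G.V,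
      ‖∑ u ∈ G.graph.neighborFinset v, g t (mpnnRep Fd Mdim f g G t u)‖ ≤
        (d : ℝ) * Lg t * (∏ k ∈ Finset.range t, Lf k * (1 + (d : ℝ) * Lg k)) * B := by
  intro v
  have hB0 : 0 ≤ B := (norm_nonneg _).trans (hB v)
  have hrep := norm_mpnnRep_le hLf0 hLg0 hg0 hgLip hf0 hfLip hdeg hB0 hB t t.le_succ
  rw [mul_assoc]
  exact norm_sum_apply_le_of_map_zero (hg0 t t.lt_succ_self) (hgLip t t.lt_succ_self)
    (hLg0 t t.lt_succ_self) (mul_nonneg (mpnnGrowth_nonneg hLf0 hLg0 t.le_succ) hB0)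
    (fun u _ => hrep u) (hdeg v)
end
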